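/- Let R be a ring and (𝒯, ℱ) a torsion pair in R-Mod. If B is torsionfree, almost torsion for (𝒯, ℱ), then B is a brick, i.e., End_R(B) is a division ring. -/

import Mathlib

universe u v
variable {R : Type u} [Ring R]

/-- A torsion pair in `R`-Mod: `Hom(𝒯, ℱ) = 0` and both classes are maximal with
this property. -/
def IsTorsionPair (R : Type u) [Ring R] (𝒯 ℱ : Set (ModuleCat.{v} R)) : Prop :=
  (∀ T ∈ 𝒯, ∀ F ∈ ℱ, ∀ f : ↑T →ₗ[R] ↑F, f = 0) ∧
  (∀ M : ModuleCat.{v} R, (∀ F ∈ ℱ, ∀ f : ↑M →ₗ[R] ↑F, f = 0) → M ∈ 𝒯) ∧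
  (∀ M : ModuleCat.{v} R, (∀ T ∈ 𝒯, ∀ f : ↑T →ₗ[R] ↑M, f = 0) → M ∈ ℱ)

/-- Every module has a torsion submodule, lying in `𝒯`, with quotient in `ℱ`. -/
def HasTorsionRadical (R : Type u) [Ring R] (𝒯 ℱ : Set (ModuleCat.{v} R)) : Prop :=
  ∀ M : ModuleCat.{v} R, ∃ tM : Submodule R ↑M,
    ModuleCat.of R tM ∈ 𝒯 ∧ ModuleCat.of R (↑M ⧸ tM) ∈ ℱ


/-- `B` is torsionfree, almost torsion for `(𝒯, ℱ)`: it is a nonzero torsionfree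
module, every proper quotient is torsion, and for every short exact sequence
`0 → B → F → M → 0` with `F ∈ ℱ` also `M ∈ ℱ`. -/
def IsTFAlmostTorsion (𝒯 ℱ : Set (ModuleCat.{v} R)) (B : ModuleCat.{v} R) : Prop :=
  Nontrivial ↑B ∧ B ∈ ℱ ∧
  (∀ N : Submodule R ↑B, N ≠ ⊥ → ModuleCat.of R (↑B ⧸ N) ∈ 𝒯) ∧
  (∀ F ∈ ℱ, ∀ i : ↑B →ₗ[R] ↑F, Function.Injective i →
    ModuleCat.of R (↑F ⧸ LinearMap.range i) ∈ ℱ)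

namespace IsTorsionPair

variable {𝒯 ℱ : Set (ModuleCat.{v} R)}

theorem subsingleton_of_mem_of_mem (htp : IsTorsionPair R 𝒯 ℱ) {M : ModuleCat.{v} R}
    (hT : M ∈ 𝒯) (hF : M ∈ ℱ) : Subsingleton M :=
  subsingleton_of_forall_eq 0 fun x => by
    simpa using LinearMap.congr_fun (htp.1 M hT M hF LinearMap.id) x

end IsTorsionPair

namespace IsTFAlmostTorsion

variable {𝒯 ℱ : Set (ModuleCat.{v} R)} {B : ModuleCat.{v} R}

theorem injective_of_ne_zero (htp : IsTorsionPair R 𝒯 ℱ) (hB : IsTFAlmostTorsion 𝒯 ℱ B)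
    {F : ModuleCat.{v} R} (hF : F ∈ ℱ) {g : B →ₗ[R] F} (hg : g ≠ 0) :
    Function.Injective g := by
  rw [← LinearMap.ker_eq_bot]
  by_contra hker
  -- `g` factors through the torsion module `B ⧸ ker g`.
  have hlift : (LinearMap.ker g).liftQ g le_rfl = 0 := htp.1 _ (hB.2.2.1 _ hker) F hF _
  exact hg (by rw [← (LinearMap.ker g).liftQ_mkQ g le_rfl, hlift, LinearMap.zero_comp])

theorem range_eq_top_of_injective (htp : IsTorsionPair R 𝒯 ℱ) (hB : IsTFAlmostTorsion 𝒯 ℱ B)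
    {f : B →ₗ[R] B} (hf : f ≠ 0) (hinj : Function.Injective f) : LinearMap.range f = ⊤ := by
  -- The cokernel of `f` is a proper quotient of `B`, hence torsion, and torsionfree by `hB`.
  have hT : ModuleCat.of R (B ⧸ LinearMap.range f) ∈ 𝒯 :=
    hB.2.2.1 _ (LinearMap.range_eq_bot.not.mpr hf)
  have hF : ModuleCat.of R (B ⧸ LinearMap.range f) ∈ ℱ := hB.2.2.2 B hB.2.1 f hinj
  exact Submodule.Quotient.subsingleton_iff.mp (htp.subsingleton_of_mem_of_mem hT hF)

end IsTFAlmostTorsion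

/-- A torsionfree, almost torsion module is a brick: its endomorphism ring is a
division ring, i.e. every nonzero endomorphism is invertible. -/
theorem stmt_5 (𝒯 ℱ : Set (ModuleCat.{v} R)) (htp : IsTorsionPair R 𝒯 ℱ)
    (B : ModuleCat.{v} R) (hB : IsTFAlmostTorsion 𝒯 ℱ B) :
    ∀ f : ↑B →ₗ[R] ↑B, f ≠ 0 → Function.Bijective f := by
  intro f hf
  have hinj : Function.Injective f := hB.injective_of_ne_zero htp hB.2.1 hf
  exact ⟨hinj, LinearMap.range_eq_top.mp (hB.range_eq_top_of_injective htp hf hinj)⟩
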